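/- arXiv:1508.04583 — 2 statements merged into one kernel-verified Lean document; each statement's English description precedes it below -/
import Mathlib

section
/- (Evaluation of the constant c_0(s).) For every s ∈ (0,1): s² ∫_0^π (cos(θ/2))^{2s−1} (sin θ)^{1−2s} (cos θ)² dθ = s² · 2^{−1−2s} · √π · (7 + 4s(s−2)) · Γ(1−s) / Γ(7/2 − s), where Γ is the Gamma function. (This quantity is the constant c_0(s) appearing in the free boundary condition; in particular c_0(1/2) = π/8.) -/
/-!
The half-angle substitution `x = sin² (θ / 2) = (1 - cos θ) / 2`, with `dx = (sin θ / 2) dθ`,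
turns the integral into `2^(1-2s) ∫₀¹ x^(-s) (1-x)^(-1/2) (1-2x)² dx`. Expanding
`(1-2x)² = 1 - 4x + 4x²` gives `B(u, ½) - 4 B(u+1, ½) + 4 B(u+2, ½)` with `u = 1 - s`, and the
recurrence `B(u+1, v) = u / (u+v) · B(u, v)` collapses this to
`(4u² + 3) / (4 (u+½)(u+3/2)) · Γ(u) Γ(½) / Γ(u+½) = √π (4u² + 3) Γ(u) / (4 Γ(u + 5/2))`.
-/

open Set intervalIntegral

open MeasureTheory Real

lemma ofReal_betaIntegrand {x : ℝ} (hx : x ∈ Ioo 0 1) (u v : ℝ) :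
    ((x ^ (u - 1) * (1 - x) ^ (v - 1) : ℝ) : ℂ)
      = (x : ℂ) ^ ((u : ℂ) - 1) * (1 - (x : ℂ)) ^ ((v : ℂ) - 1) := by
  rw [Complex.ofReal_mul, Complex.ofReal_cpow hx.1.le, Complex.ofReal_cpow (by linarith [hx.2])]
  push_cast
  rfl

lemma integrableOn_rpow_mul_one_sub_rpow {u v : ℝ} (hu : 0 < u) (hv : 0 < v) :
    IntegrableOn (fun x : ℝ => x ^ (u - 1) * (1 - x) ^ (v - 1)) (Ioo 0 1) := by
  have h := Complex.betaIntegral_convergent (u := u) (v := v) (by simpa) (by simpa)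
  rw [intervalIntegrable_iff_integrableOn_Ioc_of_le zero_le_one] at h
  refine IntegrableOn.congr_fun (h.mono_set Ioo_subset_Ioc_self).re (fun x hx => ?_)
    measurableSet_Ioo
  rw [← ofReal_betaIntegrand hx, RCLike.re_to_complex, Complex.ofReal_re]

theorem integral_rpow_mul_one_sub_rpow_eq_beta {u v : ℝ} (hu : 0 < u) (hv : 0 < v) :
    ∫ x in Ioo 0 1, x ^ (u - 1) * (1 - x) ^ (v - 1) = ProbabilityTheory.beta u v := by
  have h := Complex.betaIntegral_eq_Gamma_mul_div u v (by simpa) (by simpa)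
  rw [Complex.betaIntegral, intervalIntegral.integral_of_le zero_le_one,
    integral_Ioc_eq_integral_Ioo, ← setIntegral_congr_fun measurableSet_Ioo
      (fun x hx => ofReal_betaIntegrand hx u v), integral_complex_ofReal,
    ← Complex.ofReal_add] at h
  simp only [Complex.Gamma_ofReal] at h
  exact_mod_cast h

theorem ProbabilityTheory.beta_add_one_left {u v : ℝ} (hu : u ≠ 0) (huv : u + v ≠ 0) :
    beta (u + 1) v = u / (u + v) * beta u v := by
  rw [beta, beta, add_right_comm, Gamma_add_one hu, Gamma_add_one huv, mul_assoc,
    mul_div_mul_comm]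

theorem integral_rpow_mul_one_sub_rpow_mul_one_sub_two_mul_sq {u : ℝ} (hu : 0 < u) :
    ∫ x in Ioo 0 1, x ^ (u - 1) * (1 - x) ^ (-(1 / 2 : ℝ)) * (1 - 2 * x) ^ 2
      = √π * (4 * u ^ 2 + 3) * Gamma u / (4 * Gamma (u + 5 / 2)) := by
  have hB : ∀ w : ℝ, 0 < w → IntegrableOn (fun x : ℝ => x ^ (w - 1) * (1 - x) ^ (1 / 2 - 1 : ℝ))
      (Ioo 0 1) := fun w hw => integrableOn_rpow_mul_one_sub_rpow hw (by norm_num)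
  have hexpand : ∀ x ∈ Ioo (0 : ℝ) 1, x ^ (u - 1) * (1 - x) ^ (-(1 / 2 : ℝ)) * (1 - 2 * x) ^ 2
      = x ^ (u - 1) * (1 - x) ^ (1 / 2 - 1 : ℝ)
        - 4 * (x ^ (u + 1 - 1) * (1 - x) ^ (1 / 2 - 1 : ℝ))
        + 4 * (x ^ (u + 1 + 1 - 1) * (1 - x) ^ (1 / 2 - 1 : ℝ)) := fun x hx => by
    rw [show u + 1 - 1 = 1 + (u - 1) by ring, show u + 1 + 1 - 1 = 2 + (u - 1) by ring,
      rpow_add hx.1, rpow_add hx.1, rpow_one, rpow_two, show (1 / 2 - 1 : ℝ) = -(1 / 2) by norm_num]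
    ring
  rw [setIntegral_congr_fun measurableSet_Ioo hexpand,
    integral_add ?_ ((hB (u + 1 + 1) (by linarith)).const_mul 4),
    integral_sub (hB u hu) ((hB (u + 1) (by linarith)).const_mul 4),
    MeasureTheory.integral_const_mul, MeasureTheory.integral_const_mul,
    integral_rpow_mul_one_sub_rpow_eq_beta hu (by norm_num),
    integral_rpow_mul_one_sub_rpow_eq_beta (by linarith) (by norm_num),
    integral_rpow_mul_one_sub_rpow_eq_beta (by linarith) (by norm_num),
    ProbabilityTheory.beta_add_one_left (u := u + 1) (by linarith) (by linarith),
    ProbabilityTheory.beta_add_one_left hu.ne' (by linarith), ProbabilityTheory.beta,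
    Gamma_one_half_eq]
  · have h1 : u + 1 / 2 ≠ 0 := by linarith
    have hΓ : Gamma (u + 5 / 2) = (u + 1 / 2 + 1) * ((u + 1 / 2) * Gamma (u + 1 / 2)) := by
      rw [← Gamma_add_one h1, ← Gamma_add_one (by linarith)]
      ring_nf
    have hT : Gamma (u + 1 / 2) ≠ 0 := (Gamma_pos_of_pos (by linarith)).ne'
    rw [hΓ]
    field_simp
    ring
  · exact (hB u hu).sub ((hB (u + 1) (by linarith)).const_mul 4)

lemma image_one_sub_cos_div_two_Ioo :
    (fun θ => (1 - cos θ) / 2) '' Ioo 0 π = Ioo 0 1 := by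
  ext x
  constructor
  · rintro ⟨θ, ⟨h0, hπ⟩, rfl⟩
    have h1 : cos θ < 1 := by
      simpa using cos_lt_cos_of_nonneg_of_le_pi le_rfl hπ.le h0
    have h2 : -1 < cos θ := by
      simpa using cos_lt_cos_of_nonneg_of_le_pi h0.le le_rfl hπ
    constructor <;> linarith
  · rintro ⟨h0, h1⟩
    refine ⟨arccos (1 - 2 * x), ⟨arccos_pos.2 (by linarith), arccos_lt_pi.2 (by linarith)⟩, ?_⟩
    simp only [cos_arccos (by linarith : -1 ≤ 1 - 2 * x) (by linarith)]
    ring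

theorem integral_Ioo_zero_pi_sin_smul_comp {E : Type*} [NormedAddCommGroup E] [NormedSpace ℝ E]
    (g : ℝ → E) :
    ∫ θ in Ioo 0 π, (sin θ / 2) • g ((1 - cos θ) / 2) = ∫ x in Ioo 0 1, g x := by
  have hderiv : ∀ θ, HasDerivAt (fun θ => (1 - cos θ) / 2) (sin θ / 2) θ := fun θ => by
    simpa using ((hasDerivAt_cos θ).const_sub 1).div_const 2
  have hinj : InjOn (fun θ => (1 - cos θ) / 2) (Ioo 0 π) := fun a ha b hb hab =>
    injOn_cos ⟨ha.1.le, ha.2.le⟩ ⟨hb.1.le, hb.2.le⟩ (by simpa using hab)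
  rw [← image_one_sub_cos_div_two_Ioo, integral_image_eq_integral_abs_deriv_smul measurableSet_Ioo
    (fun θ _ => (hderiv θ).hasDerivWithinAt) hinj]
  refine setIntegral_congr_fun measurableSet_Ioo fun θ hθ => ?_
  rw [abs_of_nonneg (div_nonneg (sin_nonneg_of_nonneg_of_le_pi hθ.1.le hθ.2.le) two_pos.le)]

lemma cos_half_rpow_mul_sin_rpow_mul_cos_sq {θ : ℝ} (hθ : θ ∈ Ioo 0 π) (s : ℝ) :
    cos (θ / 2) ^ (2 * s - 1) * sin θ ^ (1 - 2 * s) * cos θ ^ 2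
      = sin θ / 2 * (2 ^ (1 - 2 * s) * (((1 - cos θ) / 2) ^ (-s)
          * (1 - (1 - cos θ) / 2) ^ (-(1 / 2 : ℝ)) * (1 - 2 * ((1 - cos θ) / 2)) ^ 2)) := by
  have hσ : 0 < sin (θ / 2) :=
    sin_pos_of_pos_of_lt_pi (by linarith [hθ.1]) (by linarith [hθ.2, pi_pos])
  have hc : 0 < cos (θ / 2) := cos_pos_of_mem_Ioo ⟨by linarith [hθ.1, pi_pos], by linarith [hθ.2]⟩
  have hsin : sin θ = 2 * sin (θ / 2) * cos (θ / 2) := by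
    rw [← sin_two_mul, mul_div_cancel₀ _ two_ne_zero]
  have hcos : cos θ = 1 - 2 * sin (θ / 2) ^ 2 := by
    rw [← cos_two_mul_eq_one_sub, mul_div_cancel₀ _ two_ne_zero]
  set σ := sin (θ / 2)
  set c := cos (θ / 2)
  have hx : (1 - (1 - 2 * σ ^ 2)) / 2 = σ ^ 2 := by ring
  have h1x : 1 - σ ^ 2 = c ^ 2 := (cos_sq' _).symm
  have hσpow : (σ ^ 2) ^ (-s) = σ ^ (1 - 2 * s) / σ := by
    rw [← rpow_natCast, ← rpow_mul hσ.le, ← rpow_sub_one hσ.ne']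
    norm_num
  have hcpow : (c ^ 2) ^ (-(1 / 2 : ℝ)) = c⁻¹ := by
    rw [← rpow_natCast, ← rpow_mul hc.le]
    norm_num [rpow_neg_one]
  have hc' : c ^ (1 - 2 * s) ≠ 0 := (rpow_pos_of_pos hc _).ne'
  rw [hsin, hcos, hx, h1x, hσpow, hcpow, mul_rpow (by positivity) hc.le,
    mul_rpow zero_le_two hσ.le, show 2 * s - 1 = -(1 - 2 * s) by ring, rpow_neg hc.le]
  field_simp

/-- **Evaluation of the constant `c₀(s)`**: for every `s ∈ (0,1)`,
`s² ∫₀^π cos(θ/2)^{2s-1} (sin θ)^{1-2s} (cos θ)² dθ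
  = s² · 2^{-1-2s} √π (7 + 4s(s-2)) Γ(1-s) / Γ(7/2 - s)`. -/
theorem c0_evaluation (s : ℝ) (hs : s ∈ Ioo (0 : ℝ) 1) :
    s ^ 2 * (∫ θ in (0:ℝ)..Real.pi,
        (Real.cos (θ / 2)) ^ (2 * s - 1) * (Real.sin θ) ^ (1 - 2 * s) *
          (Real.cos θ) ^ 2)
      = s ^ 2 * (2 : ℝ) ^ (-1 - 2 * s) * Real.sqrt Real.pi *
          (7 + 4 * s * (s - 2)) * Real.Gamma (1 - s) / Real.Gamma (7 / 2 - s) := by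
  have hsub : ∫ θ in (0 : ℝ)..π, cos (θ / 2) ^ (2 * s - 1) * sin θ ^ (1 - 2 * s) * cos θ ^ 2
      = 2 ^ (1 - 2 * s) * ∫ x in Ioo 0 1,
          x ^ ((1 - s) - 1) * (1 - x) ^ (-(1 / 2 : ℝ)) * (1 - 2 * x) ^ 2 := by
    rw [integral_of_le pi_pos.le, integral_Ioc_eq_integral_Ioo,
      setIntegral_congr_fun measurableSet_Ioo
        (fun θ hθ => cos_half_rpow_mul_sin_rpow_mul_cos_sq hθ s),
      sub_sub_cancel_left, ← MeasureTheory.integral_const_mul,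
      ← integral_Ioo_zero_pi_sin_smul_comp]
    simp only [smul_eq_mul]
  rw [hsub, integral_rpow_mul_one_sub_rpow_mul_one_sub_two_mul_sq (by linarith [hs.2]),
    show 1 - s + 5 / 2 = 7 / 2 - s by ring,
    show (2 : ℝ) ^ (1 - 2 * s) = 4 * 2 ^ (-1 - 2 * s) by
      rw [show 1 - 2 * s = 2 + (-1 - 2 * s) by ring, rpow_add two_pos]; norm_num]
  ring
end

section
/- (The model profile is a weighted harmonic function.) Fix s ∈ (0,1) and define P : ℝ² → ℝ by P(x_1, x_n) = 2^{−s}( √(x_1² + x_n²) + x_1 )^s. Then: (a) P is smooth on the open upper half plane {x_n > 0}, and for every (x_1, x_n) with x_n > 0, ∂_{x_1}( x_n^{1−2s} ∂_{x_1} P ) + ∂_{x_n}( x_n^{1−2s} ∂_{x_n} P ) = 0; (b) for every x_1 > 0, lim_{x_n → 0+} x_n^{1−2s} ∂_{x_n} P(x_1, x_n) = 0; (c) P is homogeneous of degree s: P(λ x_1, λ x_n) = λ^s P(x_1, x_n) for all λ ≥ 0, and in polar coordinates x_1 = r cos θ, x_n = r sin θ with 0 ≤ θ ≤ π one has P = r^s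 (cos(θ/2))^{2s}. -/
/-! Write `R = √(x₁² + xₙ²)` and `B = R + x₁`. Then `∂₁B = B / R` and `∂ₙB = xₙ / R`, so
`∂₁P = 2^{-s} s B^s / R` and `∂ₙP = 2^{-s} s B^{s-1} xₙ / R`. Differentiating once more, the two
terms of the weighted equation come out as `±2^{-s} s xₙ^{1-2s} B^s (sR - x₁) / R³`, the second
one after using `xₙ² = B (R - x₁)`. The conormal derivative is `xₙ^{2-2s}` times a function
continuous up to `xₙ = 0` when `x₁ > 0`, hence tends to `0` because `s < 1`. Homogeneity is
immediate, and on the unit circle `B = 1 + cos θ = 2 cos² (θ / 2)`. -/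

open Set Filter Topology

noncomputable section

/-- The model profile `P(x₁, xₙ) = 2^{-s}(√(x₁² + xₙ²) + x₁)^s` on `ℝ²`. -/
def Pfun (s x₁ xn : ℝ) : ℝ :=
  (2 : ℝ) ^ (-s) * (Real.sqrt (x₁ ^ 2 + xn ^ 2) + x₁) ^ s

open Real

lemma sqrt_sq_add_sq_add_nonneg (x y : ℝ) : 0 ≤ √(x ^ 2 + y ^ 2) + x := by
  have : |x| ≤ √(x ^ 2 + y ^ 2) := Real.abs_le_sqrt (by nlinarith)
  linarith [neg_abs_le x]

lemma sqrt_sq_add_sq_add_pos (x : ℝ) {y : ℝ} (hy : y ≠ 0) : 0 < √(x ^ 2 + y ^ 2) + x := by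
  have : |x| < √(x ^ 2 + y ^ 2) :=
    (Real.lt_sqrt (abs_nonneg x)).2 (by rw [sq_abs]; exact lt_add_of_pos_right _ (by positivity))
  linarith [neg_abs_le x]

lemma hasDerivAt_sqrt_sq_add_sq_fst (x y : ℝ) (h : x ^ 2 + y ^ 2 ≠ 0) :
    HasDerivAt (fun a => √(a ^ 2 + y ^ 2)) (x / √(x ^ 2 + y ^ 2)) x := by
  convert ((hasDerivAt_pow 2 x).add_const (y ^ 2)).sqrt h using 1
  field_simp
  ring

lemma hasDerivAt_sqrt_sq_add_sq_snd (x y : ℝ) (h : x ^ 2 + y ^ 2 ≠ 0) :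
    HasDerivAt (fun b => √(x ^ 2 + b ^ 2)) (y / √(x ^ 2 + y ^ 2)) y := by
  simp_rw [add_comm (x ^ 2)] at h ⊢
  exact hasDerivAt_sqrt_sq_add_sq_fst y x h

lemma hasDerivAt_rpow_sqrt_sq_add_sq_add_fst (p x : ℝ) {y : ℝ} (hy : y ≠ 0) :
    HasDerivAt (fun a => (√(a ^ 2 + y ^ 2) + a) ^ p)
      (p * (√(x ^ 2 + y ^ 2) + x) ^ p / √(x ^ 2 + y ^ 2)) x := by
  have hR : √(x ^ 2 + y ^ 2) ≠ 0 := by positivity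
  have hB := (sqrt_sq_add_sq_add_pos x hy).ne'
  refine (((hasDerivAt_sqrt_sq_add_sq_fst x y (by positivity)).fun_add
    (hasDerivAt_id' x)).rpow_const (Or.inl hB)).congr_deriv ?_
  rw [Real.rpow_sub_one hB]
  field_simp
  ring

lemma hasDerivAt_rpow_sqrt_sq_add_sq_add_snd (p x : ℝ) {y : ℝ} (hy : y ≠ 0) :
    HasDerivAt (fun b => (√(x ^ 2 + b ^ 2) + x) ^ p)
      (p * (√(x ^ 2 + y ^ 2) + x) ^ (p - 1) * y / √(x ^ 2 + y ^ 2)) y := by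
  refine (((hasDerivAt_sqrt_sq_add_sq_snd x y (by positivity)).add_const x).rpow_const
    (Or.inl (sqrt_sq_add_sq_add_pos x hy).ne')).congr_deriv ?_
  ring

lemma hasDerivAt_pfun_fst (s x : ℝ) {y : ℝ} (hy : y ≠ 0) :
    HasDerivAt (fun a => Pfun s a y)
      (2 ^ (-s) * (s * (√(x ^ 2 + y ^ 2) + x) ^ s / √(x ^ 2 + y ^ 2))) x :=
  (hasDerivAt_rpow_sqrt_sq_add_sq_add_fst s x hy).const_mul _

lemma hasDerivAt_pfun_snd (s x : ℝ) {y : ℝ} (hy : y ≠ 0) :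
    HasDerivAt (fun b => Pfun s x b)
      (2 ^ (-s) * (s * (√(x ^ 2 + y ^ 2) + x) ^ (s - 1) * y / √(x ^ 2 + y ^ 2))) y :=
  (hasDerivAt_rpow_sqrt_sq_add_sq_add_snd s x hy).const_mul _

lemma hasDerivAt_rpow_sqrt_sq_add_sq_add_div_sqrt_fst (s x : ℝ) {y : ℝ} (hy : y ≠ 0) :
    HasDerivAt (fun a => (√(a ^ 2 + y ^ 2) + a) ^ s / √(a ^ 2 + y ^ 2))
      ((√(x ^ 2 + y ^ 2) + x) ^ s * (s * √(x ^ 2 + y ^ 2) - x) / √(x ^ 2 + y ^ 2) ^ 3) x := by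
  have hR : √(x ^ 2 + y ^ 2) ≠ 0 := by positivity
  refine ((hasDerivAt_rpow_sqrt_sq_add_sq_add_fst s x hy).div
    (hasDerivAt_sqrt_sq_add_sq_fst x y (by positivity)) hR).congr_deriv ?_
  field_simp

lemma hasDerivAt_rpow_mul_rpow_sqrt_sq_add_sq_add_snd (s x : ℝ) {y : ℝ} (hy : 0 < y) :
    HasDerivAt
      (fun b => b ^ (1 - 2 * s) * ((√(x ^ 2 + b ^ 2) + x) ^ (s - 1) * b / √(x ^ 2 + b ^ 2)))
      (-(y ^ (1 - 2 * s) *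
        ((√(x ^ 2 + y ^ 2) + x) ^ s * (s * √(x ^ 2 + y ^ 2) - x) / √(x ^ 2 + y ^ 2) ^ 3))) y := by
  have hR : √(x ^ 2 + y ^ 2) ≠ 0 := by positivity
  have hB := (sqrt_sq_add_sq_add_pos x hy.ne').ne'
  have hRsq : √(x ^ 2 + y ^ 2) ^ 2 = x ^ 2 + y ^ 2 := Real.sq_sqrt (by positivity)
  refine ((Real.hasDerivAt_rpow_const (Or.inl hy.ne')).fun_mul
    (((hasDerivAt_rpow_sqrt_sq_add_sq_add_snd (s - 1) x hy.ne').fun_mul (hasDerivAt_id' y)).fun_div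
      (hasDerivAt_sqrt_sq_add_sq_snd x y (by positivity)) hR)).congr_deriv ?_
  simp only [Real.rpow_sub_one hB, Real.rpow_sub_one hy.ne']
  field_simp
  linear_combination (√(x ^ 2 + y ^ 2) + x) ^ s * ((2 - s) * √(x ^ 2 + y ^ 2) + x) * hRsq

lemma pfun_weighted_equation (s x₁ xn : ℝ) (hxn : 0 < xn) :
    deriv (fun t => xn ^ (1 - 2 * s) * deriv (fun a => Pfun s a xn) t) x₁
      + deriv (fun t => t ^ (1 - 2 * s) * deriv (fun b => Pfun s x₁ b) t) xn = 0 := by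
  have h_fst : (fun t => xn ^ (1 - 2 * s) * deriv (fun a => Pfun s a xn) t) =
      fun t => xn ^ (1 - 2 * s) * (2 ^ (-s) * s) *
        ((√(t ^ 2 + xn ^ 2) + t) ^ s / √(t ^ 2 + xn ^ 2)) := by
    funext t
    rw [(hasDerivAt_pfun_fst s t hxn.ne').deriv]
    ring
  have h_snd : (fun t => t ^ (1 - 2 * s) * deriv (fun b => Pfun s x₁ b) t) =ᶠ[𝓝 xn]
      fun t => 2 ^ (-s) * s *
        (t ^ (1 - 2 * s) * ((√(x₁ ^ 2 + t ^ 2) + x₁) ^ (s - 1) * t / √(x₁ ^ 2 + t ^ 2))) := by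
    filter_upwards [Ioi_mem_nhds hxn] with t (ht : 0 < t)
    rw [(hasDerivAt_pfun_snd s x₁ ht.ne').deriv]
    ring
  rw [h_fst, h_snd.deriv_eq,
    ((hasDerivAt_rpow_sqrt_sq_add_sq_add_div_sqrt_fst s x₁ hxn.ne').const_mul _).deriv,
    ((hasDerivAt_rpow_mul_rpow_sqrt_sq_add_sq_add_snd s x₁ hxn).const_mul _).deriv]
  ring

lemma tendsto_rpow_mul_deriv_pfun_snd {s : ℝ} (hs : s < 1) {x₁ : ℝ} (hx₁ : 0 < x₁) :
    Tendsto (fun xn => xn ^ (1 - 2 * s) * deriv (fun b => Pfun s x₁ b) xn) (𝓝[>] 0) (𝓝 0) := by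
  set F : ℝ → ℝ := fun y => y ^ (2 - 2 * s) *
    (2 ^ (-s) * s * ((√(x₁ ^ 2 + y ^ 2) + x₁) ^ (s - 1) / √(x₁ ^ 2 + y ^ 2)))
  have h_eq : F =ᶠ[𝓝[>] 0] fun y => y ^ (1 - 2 * s) * deriv (fun b => Pfun s x₁ b) y := by
    filter_upwards [self_mem_nhdsWithin] with y (hy : 0 < y)
    simp only [F]
    rw [(hasDerivAt_pfun_snd s x₁ hy.ne').deriv, show 2 - 2 * s = 1 - 2 * s + 1 by ring,
      Real.rpow_add_one hy.ne']
    ring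
  have hF : ContinuousAt F 0 := by
    have hR : √(x₁ ^ 2 + 0 ^ 2) ≠ 0 := by positivity
    have hB : √(x₁ ^ 2 + 0 ^ 2) + x₁ ≠ 0 := by positivity
    have h_base : ContinuousAt (fun y => √(x₁ ^ 2 + y ^ 2) + x₁) 0 := by fun_prop
    exact (Real.continuousAt_rpow_const _ _ (Or.inr (by linarith))).mul
      (continuousAt_const.mul ((h_base.rpow_const (Or.inl hB)).div (by fun_prop) hR))
  have hF0 : F 0 = 0 := by
    simp only [F]
    rw [Real.zero_rpow (by linarith), zero_mul]
  simpa only [hF0] using (hF.tendsto.mono_left nhdsWithin_le_nhds).congr' h_eq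

lemma pfun_mul_mul (s : ℝ) {c : ℝ} (hc : 0 ≤ c) (x y : ℝ) :
    Pfun s (c * x) (c * y) = c ^ s * Pfun s x y := by
  have h_sqrt : √((c * x) ^ 2 + (c * y) ^ 2) = c * √(x ^ 2 + y ^ 2) := by
    rw [show (c * x) ^ 2 + (c * y) ^ 2 = c ^ 2 * (x ^ 2 + y ^ 2) by ring,
      Real.sqrt_mul (sq_nonneg c), Real.sqrt_sq hc]
  rw [Pfun, Pfun, h_sqrt, ← mul_add, Real.mul_rpow hc (sqrt_sq_add_sq_add_nonneg x y)]
  ring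

lemma pfun_cos_sin (s θ : ℝ) (hθ : θ ∈ Icc 0 π) :
    Pfun s (cos θ) (sin θ) = cos (θ / 2) ^ (2 * s) := by
  have h_half : 0 ≤ cos (θ / 2) :=
    Real.cos_nonneg_of_mem_Icc ⟨by linarith [hθ.1, Real.pi_pos], by linarith [hθ.2]⟩
  have h_base : √(cos θ ^ 2 + sin θ ^ 2) + cos θ = 2 * cos (θ / 2) ^ 2 := by
    rw [cos_sq_add_sin_sq, Real.sqrt_one, cos_sq, show 2 * (θ / 2) = θ by ring]
    ring
  rw [Pfun, h_base, Real.mul_rpow zero_le_two (sq_nonneg _), ← mul_assoc,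
    ← Real.rpow_add zero_lt_two, neg_add_cancel, Real.rpow_zero, one_mul,
    Real.rpow_mul h_half, Real.rpow_two]

lemma contDiffOn_pfun (s : ℝ) (n : WithTop ℕ∞) :
    ContDiffOn ℝ n (fun p : ℝ × ℝ => Pfun s p.1 p.2) {p | 0 < p.2} := by
  intro p (hp : 0 < p.2)
  have h_base : ContDiffAt ℝ n (fun q : ℝ × ℝ => √(q.1 ^ 2 + q.2 ^ 2) + q.1) p :=
    (((contDiffAt_fst.pow 2).add (contDiffAt_snd.pow 2)).sqrt (by positivity)).add contDiffAt_fst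
  exact (contDiffAt_const.mul
    (h_base.rpow_const_of_ne (sqrt_sq_add_sq_add_pos p.1 hp.ne').ne')).contDiffWithinAt

/-- **The model profile is a weighted harmonic function**: for `s ∈ (0,1)`,
(a) `P` is smooth on `{xₙ > 0}` and satisfies
`∂_{x₁}(xₙ^{1-2s} ∂_{x₁}P) + ∂_{xₙ}(xₙ^{1-2s} ∂_{xₙ}P) = 0` there;
(b) `xₙ^{1-2s} ∂_{xₙ}P(x₁, xₙ) → 0` as `xₙ → 0+`, for every `x₁ > 0`;
(c) `P` is homogeneous of degree `s`, and equals `r^s cos(θ/2)^{2s}` in polar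
coordinates `x₁ = r cos θ`, `xₙ = r sin θ`, `0 ≤ θ ≤ π`. -/
theorem model_profile_weighted_harmonic (s : ℝ) (hs : s ∈ Ioo (0 : ℝ) 1) :
    -- (a) smoothness on the open upper half-plane
    (ContDiffOn ℝ (⊤ : ℕ∞) (fun p : ℝ × ℝ => Pfun s p.1 p.2) {p : ℝ × ℝ | 0 < p.2}) ∧
    -- (a) the weighted equation `div(xₙ^{1-2s} ∇P) = 0` for `xₙ > 0`
    (∀ x₁ xn : ℝ, 0 < xn →
      deriv (fun t : ℝ => xn ^ (1 - 2 * s) * deriv (fun a : ℝ => Pfun s a xn) t) x₁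
        + deriv (fun t : ℝ => t ^ (1 - 2 * s) * deriv (fun b : ℝ => Pfun s x₁ b) t) xn
        = 0) ∧
    -- (b) vanishing weighted conormal derivative on `{x₁ > 0}`
    (∀ x₁ : ℝ, 0 < x₁ →
      Tendsto (fun xn : ℝ => xn ^ (1 - 2 * s) * deriv (fun b : ℝ => Pfun s x₁ b) xn)
        (𝓝[>] (0 : ℝ)) (𝓝 0)) ∧
    -- (c) homogeneity of degree `s`
    (∀ lam x₁ xn : ℝ, 0 ≤ lam →
      Pfun s (lam * x₁) (lam * xn) = lam ^ s * Pfun s x₁ xn) ∧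
    -- (c) polar form
    (∀ r θ : ℝ, 0 ≤ r → θ ∈ Icc (0 : ℝ) Real.pi →
      Pfun s (r * Real.cos θ) (r * Real.sin θ)
        = r ^ s * (Real.cos (θ / 2)) ^ (2 * s)) := by
  refine ⟨contDiffOn_pfun s _, fun x₁ xn hxn => pfun_weighted_equation s x₁ xn hxn,
    fun x₁ hx₁ => tendsto_rpow_mul_deriv_pfun_snd hs.2 hx₁,
    fun lam x₁ xn hlam => pfun_mul_mul s hlam x₁ xn, fun r θ hr hθ => ?_⟩
  rw [pfun_mul_mul s hr, pfun_cos_sin s θ hθ]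
end
end
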